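/- Let 𝓛 and 𝓐_un be linear endomorphisms of the space of d×d complex matrices such that 𝓐_un maps positive semidefinite matrices to positive semidefinite matrices. Let ρ_0 be a density matrix, let Δt > 0, c > 0 and M ∈ ℕ, and assume: exp(Δt·𝓛)(ρ_0) is a density matrix, ‖exp(Δt·𝓛)(ρ_0) − 𝓐_un(ρ_0)‖₁ ≤ c·Δt^{M+1}, and c·Δt^{M+1} ≤ 1/2. Then ‖exp(Δt·𝓛)(ρ_0) − 𝓐_un(ρ_0)/Tr(𝓐_un(ρ_0))‖₁ ≤ 4c·Δt^{M+1}. -/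

import Mathlib

/-!
Write `σ - A / Tr A = (σ - A) + (1 - (Tr A)⁻¹) • A`. As `A ⪰ 0`, `‖A‖₁ = Tr A`, so the second
term has trace norm `|Tr A - 1| = |Re Tr (σ - A)| ≤ ‖σ - A‖₁`, and the error at most doubles.
This also covers `Tr A = 0`, where `(Tr A)⁻¹ = 0`.

The trace-norm facts behind this come from `‖X‖₁ = max {Re Tr (C X) : C Cᴴ ≤ 1}`: in an
eigenbasis of `XᴴX` the bound is Cauchy–Schwarz on each diagonal entry, and the maximum is
attained at `C = (XᴴX)^(-1/2) Xᴴ`, with the pseudo-inverse.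
-/

open scoped Matrix ComplexOrder

attribute [local instance] Matrix.normedAddCommGroup Matrix.normedSpace

/-- Trace norm (Schatten-1 norm) of a complex matrix: `‖A‖₁ = Tr √(Aᴴ A)`. -/
noncomputable def traceNorm {d : ℕ} (A : Matrix (Fin d) (Fin d) ℂ) : ℝ :=
  (((Matrix.posSemidef_conjTranspose_mul_self A).1.eigenvectorUnitary : Matrix (Fin d) (Fin d) ℂ) *
    Matrix.diagonal ((fun x : ℝ => ((Real.sqrt x : ℝ) : ℂ)) ∘ (Matrix.posSemidef_conjTranspose_mul_self A).1.eigenvalues) *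
    (star (Matrix.posSemidef_conjTranspose_mul_self A).1.eigenvectorUnitary :
      Matrix (Fin d) (Fin d) ℂ)).trace.re

noncomputable instance matrixCLMIsTopologicalRing {d : ℕ} :
    IsTopologicalRing (Matrix (Fin d) (Fin d) ℂ →L[ℂ] Matrix (Fin d) (Fin d) ℂ) := by
  exact @NonUnitalSeminormedRing.toIsTopologicalRing _
    (ContinuousLinearMap.toSeminormedRing
      (E := Matrix (Fin d) (Fin d) ℂ) (𝕜 := ℂ)).toNonUnitalSeminormedRing

namespace Matrix

variable {l m n : Type*} [Fintype n]

lemma re_mul_conjTranspose_apply_self (A : Matrix m n ℂ) (i : m) :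
    ((A * Aᴴ) i i).re = ∑ k, Complex.normSq (A i k) := by
  simp [mul_apply, Complex.re_sum, Complex.mul_conj]

lemma re_conjTranspose_mul_apply_self (A : Matrix n m ℂ) (j : m) :
    ((Aᴴ * A) j j).re = ∑ k, Complex.normSq (A k j) := by
  simp [mul_apply, Complex.re_sum, mul_comm, Complex.mul_conj]

lemma sum_normSq_row_le_one [DecidableEq m] {A : Matrix m n ℂ} (hA : (1 - A * Aᴴ).PosSemidef)
    (i : m) : ∑ k, Complex.normSq (A i k) ≤ 1 := by
  have h := (Complex.nonneg_iff.mp (hA.diag_nonneg (i := i))).1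
  simpa [re_mul_conjTranspose_apply_self] using h

lemma norm_mul_apply_le (A : Matrix l n ℂ) (B : Matrix n m ℂ) (i : l) (j : m) :
    ‖(A * B) i j‖ ≤ √(∑ k, Complex.normSq (A i k)) * √(∑ k, Complex.normSq (B k j)) := by
  simp only [Complex.normSq_eq_norm_sq]
  calc ‖(A * B) i j‖ ≤ ∑ k, ‖A i k‖ * ‖B k j‖ := by
        simpa only [mul_apply, norm_mul] using norm_sum_le Finset.univ fun k => A i k * B k j
    _ ≤ _ := Real.sum_mul_le_sqrt_mul_sqrt _ _ _

end Matrix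

lemma abs_one_sub_inv_mul_le {r : ℝ} (hr : 0 ≤ r) : |1 - r⁻¹| * r ≤ |1 - r| := by
  rcases hr.eq_or_lt with rfl | hr
  · simp
  · rw [← abs_of_pos hr, ← abs_mul, abs_of_pos hr, sub_mul, inv_mul_cancel₀ hr.ne', one_mul,
      abs_sub_comm]

open Matrix

section TraceNorm

variable {d : ℕ}

lemma traceNorm_eq_sum_sqrt_eigenvalues (X : Matrix (Fin d) (Fin d) ℂ) :
    traceNorm X = ∑ i, √((posSemidef_conjTranspose_mul_self X).1.eigenvalues i) := by
  rw [traceNorm, trace_mul_cycle, Unitary.coe_star_mul_self, one_mul, trace_diagonal]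
  simp [Complex.re_sum]

lemma traceNorm_eq_re_trace_cfc_sqrt (X : Matrix (Fin d) (Fin d) ℂ) :
    traceNorm X = (cfc Real.sqrt (Xᴴ * X)).trace.re := by
  rw [(posSemidef_conjTranspose_mul_self X).1.cfc_eq, IsHermitian.cfc,
    Unitary.conjStarAlgAut_apply]
  rfl

lemma re_trace_mul_le_traceNorm {C : Matrix (Fin d) (Fin d) ℂ} (hC : (1 - C * Cᴴ).PosSemidef)
    (X : Matrix (Fin d) (Fin d) ℂ) : (C * X).trace.re ≤ traceNorm X := by
  set hH := (posSemidef_conjTranspose_mul_self X).1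
  set V : Matrix (Fin d) (Fin d) ℂ := ↑hH.eigenvectorUnitary
  have hVV : V * Vᴴ = 1 := Unitary.coe_mul_star_self hH.eigenvectorUnitary
  have hV'V : Vᴴ * V = 1 := Unitary.coe_star_mul_self hH.eigenvectorUnitary
  have hrow : (1 - (Vᴴ * C) * (Vᴴ * C)ᴴ).PosSemidef := by
    convert hC.conjTranspose_mul_mul_same V using 1
    simp only [conjTranspose_mul, conjTranspose_conjTranspose, Matrix.mul_sub, Matrix.sub_mul,
      Matrix.mul_one, hV'V, Matrix.mul_assoc]
  have hcol : (X * V)ᴴ * (X * V) = diagonal (fun i => (hH.eigenvalues i : ℂ)) := by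
    have h := hH.conjStarAlgAut_star_eigenvectorUnitary
    rw [Unitary.conjStarAlgAut_apply, Unitary.coe_star, star_star] at h
    rw [conjTranspose_mul, Matrix.mul_assoc, ← Matrix.mul_assoc Xᴴ, ← Matrix.mul_assoc]
    exact h
  have hdiag (i : Fin d) : ‖((Vᴴ * C) * (X * V)) i i‖ ≤ √(hH.eigenvalues i) := by
    refine (norm_mul_apply_le _ _ i i).trans ?_
    rw [← re_conjTranspose_mul_apply_self, hcol, diagonal_apply_eq, Complex.ofReal_re]
    exact mul_le_of_le_one_left (Real.sqrt_nonneg _)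
      (Real.sqrt_le_one.mpr (sum_normSq_row_le_one hrow i))
  have htrace : (C * X).trace = ((Vᴴ * C) * (X * V)).trace := by
    rw [Matrix.mul_assoc, ← Matrix.mul_assoc C, ← Matrix.mul_assoc, trace_mul_cycle, hVV, one_mul]
  calc (C * X).trace.re ≤ ‖((Vᴴ * C) * (X * V)).trace‖ := htrace ▸ Complex.re_le_norm _
    _ ≤ ∑ i, ‖((Vᴴ * C) * (X * V)) i i‖ := norm_sum_le _ _
    _ ≤ ∑ i, √(hH.eigenvalues i) := Finset.sum_le_sum fun i _ => hdiag i
    _ = traceNorm X := (traceNorm_eq_sum_sqrt_eigenvalues X).symm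

open scoped MatrixOrder in
lemma exists_re_trace_mul_eq_traceNorm (X : Matrix (Fin d) (Fin d) ℂ) :
    ∃ C : Matrix (Fin d) (Fin d) ℂ, (1 - C * Cᴴ).PosSemidef ∧ (C * X).trace.re = traceNorm X := by
  set H := Xᴴ * X
  have hH : IsSelfAdjoint H := (posSemidef_conjTranspose_mul_self X).1
  have hcont (f : ℝ → ℝ) : ContinuousOn f (spectrum ℝ H) := H.finite_real_spectrum.continuousOn f
  -- `(√x)⁻¹ = 0` for `x ≤ 0`, so `Q` is the pseudo-inverse of `√(XᴴX)` and the scalar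
  -- identities below hold for every real `x`.
  set Q := cfc (fun x : ℝ => (√x)⁻¹) H
  have hQ : Qᴴ = Q := cfc_predicate (fun x : ℝ => (√x)⁻¹) H
  refine ⟨Q * Xᴴ, ?_, ?_⟩
  · have hCC : Q * Xᴴ * (Q * Xᴴ)ᴴ = cfc (fun x : ℝ => (√x)⁻¹ * x * (√x)⁻¹) H := by
      rw [conjTranspose_mul, conjTranspose_conjTranspose, hQ, Matrix.mul_assoc, ← Matrix.mul_assoc Xᴴ,
        cfc_mul _ _ _ (hcont _) (hcont _), cfc_mul _ _ _ (hcont _) (hcont _), cfc_id' ℝ H]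
      simp only [H, Q, Matrix.mul_assoc]
    have hle : 0 ≤ cfc (fun x : ℝ => 1 - (√x)⁻¹ * x * (√x)⁻¹) H := by
      refine cfc_nonneg fun x _ => ?_
      rcases le_or_gt x 0 with hx | hx
      · simp [Real.sqrt_eq_zero'.mpr hx]
      · rw [mul_right_comm, ← mul_inv, Real.mul_self_sqrt hx.le, inv_mul_cancel₀ hx.ne']
        exact (sub_self (1 : ℝ)).ge
    rw [cfc_sub _ _ _ (hcont _) (hcont _), cfc_const_one ℝ H, ← hCC] at hle
    exact hle.posSemidef
  · have hsqrt : (fun x : ℝ => (√x)⁻¹ * x) = Real.sqrt := by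
      ext x
      rw [inv_mul_eq_div, Real.div_sqrt]
    rw [Matrix.mul_assoc, traceNorm_eq_re_trace_cfc_sqrt, ← hsqrt,
      cfc_mul _ _ _ (hcont _) (hcont _), cfc_id' ℝ (Xᴴ * X)]

theorem traceNorm_add_le (X Y : Matrix (Fin d) (Fin d) ℂ) :
    traceNorm (X + Y) ≤ traceNorm X + traceNorm Y := by
  obtain ⟨C, hC, hCXY⟩ := exists_re_trace_mul_eq_traceNorm (X + Y)
  rw [← hCXY, Matrix.mul_add, trace_add, Complex.add_re]
  exact add_le_add (re_trace_mul_le_traceNorm hC X) (re_trace_mul_le_traceNorm hC Y)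

theorem traceNorm_smul (c : ℂ) (X : Matrix (Fin d) (Fin d) ℂ) :
    traceNorm (c • X) = ‖c‖ * traceNorm X := by
  have hH : IsSelfAdjoint (Xᴴ * X) := (posSemidef_conjTranspose_mul_self X).1
  have hsq : (c • X)ᴴ * (c • X) = (‖c‖ ^ 2 : ℝ) • (Xᴴ * X) := by
    rw [conjTranspose_smul, Matrix.smul_mul, Matrix.mul_smul, smul_smul, Complex.star_def,
      Complex.conj_mul', ← Complex.coe_smul]
    norm_cast
  have hsqrt : (fun x => √(‖c‖ ^ 2 * x)) = fun x => ‖c‖ * √x := by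
    ext x
    rw [Real.sqrt_mul (sq_nonneg _), Real.sqrt_sq (norm_nonneg _)]
  rw [traceNorm_eq_re_trace_cfc_sqrt, traceNorm_eq_re_trace_cfc_sqrt, hsq,
    ← cfc_comp_const_mul _ _ _ Real.continuous_sqrt.continuousOn hH, hsqrt,
    cfc_const_mul _ _ _ Real.continuous_sqrt.continuousOn, trace_smul, Complex.smul_re, smul_eq_mul]

theorem Matrix.PosSemidef.traceNorm_eq {P : Matrix (Fin d) (Fin d) ℂ} (hP : P.PosSemidef) :
    traceNorm P = P.trace.re := by
  have hsa : IsSelfAdjoint P := hP.1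
  have hsq : Pᴴ * P = P ^ 2 := by rw [pow_two, hP.1]
  have hsqrt : cfc (fun x : ℝ => √(x ^ 2)) P = cfc (fun x : ℝ => x) P := by
    refine cfc_congr fun x hx => ?_
    rw [hP.1.spectrum_real_eq_range_eigenvalues] at hx
    obtain ⟨i, rfl⟩ := hx
    exact Real.sqrt_sq (hP.eigenvalues_nonneg i)
  rw [traceNorm_eq_re_trace_cfc_sqrt, hsq, ← cfc_comp_pow Real.sqrt 2 P, hsqrt, cfc_id' ℝ P]

theorem abs_re_trace_le_traceNorm (X : Matrix (Fin d) (Fin d) ℂ) :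
    |X.trace.re| ≤ traceNorm X := by
  have hone : (1 - (1 : Matrix (Fin d) (Fin d) ℂ) * 1ᴴ).PosSemidef := by simp [PosSemidef.zero]
  have hle (Y : Matrix (Fin d) (Fin d) ℂ) : Y.trace.re ≤ traceNorm Y := by
    simpa using re_trace_mul_le_traceNorm hone Y
  refine abs_le'.mpr ⟨hle X, ?_⟩
  have hneg := hle ((-1 : ℂ) • X)
  rwa [traceNorm_smul, trace_smul, norm_neg, norm_one, one_mul, neg_one_smul,
    Complex.neg_re] at hneg

theorem traceNorm_nonneg (X : Matrix (Fin d) (Fin d) ℂ) : 0 ≤ traceNorm X :=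
  (abs_nonneg _).trans (abs_re_trace_le_traceNorm X)

theorem traceNorm_sub_inv_trace_smul_le {σ A : Matrix (Fin d) (Fin d) ℂ} (hσ : σ.trace = 1)
    (hA : A.PosSemidef) : traceNorm (σ - (A.trace)⁻¹ • A) ≤ 2 * traceNorm (σ - A) := by
  obtain ⟨r, hr, hAr⟩ : ∃ r : ℝ, 0 ≤ r ∧ A.trace = r :=
    ⟨_, Complex.nonneg_iff.mp hA.trace_nonneg |>.1, Complex.eq_re_of_ofReal_le hA.trace_nonneg⟩
  have hdefect : |1 - r| ≤ traceNorm (σ - A) := by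
    simpa [trace_sub, hσ, hAr] using abs_re_trace_le_traceNorm (σ - A)
  have hsplit : σ - (A.trace)⁻¹ • A = (σ - A) + ((1 - r⁻¹ : ℝ) : ℂ) • A := by
    rw [hAr]
    push_cast
    rw [sub_smul, one_smul]
    abel
  calc traceNorm (σ - (A.trace)⁻¹ • A)
      ≤ traceNorm (σ - A) + |1 - r⁻¹| * r := by
        grw [hsplit, traceNorm_add_le, traceNorm_smul, hA.traceNorm_eq, hAr, Complex.norm_real,
          Real.norm_eq_abs, Complex.ofReal_re]
    _ ≤ 2 * traceNorm (σ - A) := by linarith [abs_one_sub_inv_mul_le hr]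

end TraceNorm

theorem normalization_error_general {d : ℕ}
    (𝓛 : Matrix (Fin d) (Fin d) ℂ →L[ℂ] Matrix (Fin d) (Fin d) ℂ)
    (𝓐un : Matrix (Fin d) (Fin d) ℂ →ₗ[ℂ] Matrix (Fin d) (Fin d) ℂ)
    (hpres : ∀ ρ : Matrix (Fin d) (Fin d) ℂ, ρ.PosSemidef → (𝓐un ρ).PosSemidef)
    (ρ0 : Matrix (Fin d) (Fin d) ℂ) (hρ0 : ρ0.PosSemidef)
    (Δt c : ℝ) (M : ℕ)
    (hexp_tr : ((NormedSpace.exp ((Δt : ℂ) • 𝓛)) ρ0).trace = 1)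
    (herr : traceNorm ((NormedSpace.exp ((Δt : ℂ) • 𝓛)) ρ0 - 𝓐un ρ0)
      ≤ c * Δt ^ (M + 1)) :
    traceNorm ((NormedSpace.exp ((Δt : ℂ) • 𝓛)) ρ0
        - ((𝓐un ρ0).trace)⁻¹ • 𝓐un ρ0)
      ≤ 4 * c * Δt ^ (M + 1) := by
  have hnormalized := traceNorm_sub_inv_trace_smul_le hexp_tr (hpres ρ0 hρ0)
  have hnonneg := traceNorm_nonneg ((NormedSpace.exp ((Δt : ℂ) • 𝓛)) ρ0 - 𝓐un ρ0)
  linarith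

/-- One-step normalization error (Lemma 6, first part, of the paper): if the
positivity-preserving linear scheme `𝓐_un` is within `c Δt^{M+1} ≤ 1/2` of
`exp(Δt 𝓛)` at the density matrix `ρ_0`, then the normalized output
`𝓐_un(ρ_0)/Tr(𝓐_un(ρ_0))` is within `4 c Δt^{M+1}` of `exp(Δt 𝓛)(ρ_0)`. -/
theorem normalization_error {d : ℕ} (hd : 1 ≤ d)
    (𝓛 : Matrix (Fin d) (Fin d) ℂ →L[ℂ] Matrix (Fin d) (Fin d) ℂ)
    (𝓐un : Matrix (Fin d) (Fin d) ℂ →ₗ[ℂ] Matrix (Fin d) (Fin d) ℂ)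
    (hpres : ∀ ρ : Matrix (Fin d) (Fin d) ℂ, ρ.PosSemidef → (𝓐un ρ).PosSemidef)
    (ρ0 : Matrix (Fin d) (Fin d) ℂ) (hρ0 : ρ0.PosSemidef) (hρ0tr : ρ0.trace = 1)
    (Δt c : ℝ) (M : ℕ) (hΔt : 0 < Δt) (hc : 0 < c)
    (hexp_pos : ((NormedSpace.exp ((Δt : ℂ) • 𝓛)) ρ0).PosSemidef)
    (hexp_tr : ((NormedSpace.exp ((Δt : ℂ) • 𝓛)) ρ0).trace = 1)
    (herr : traceNorm ((NormedSpace.exp ((Δt : ℂ) • 𝓛)) ρ0 - 𝓐un ρ0)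
      ≤ c * Δt ^ (M + 1))
    (hsmall : c * Δt ^ (M + 1) ≤ 1 / 2) :
    traceNorm ((NormedSpace.exp ((Δt : ℂ) • 𝓛)) ρ0
        - ((𝓐un ρ0).trace)⁻¹ • 𝓐un ρ0)
      ≤ 4 * c * Δt ^ (M + 1) :=
  normalization_error_general 𝓛 𝓐un hpres ρ0 hρ0 Δt c M hexp_tr herr
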